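/- Let H, S : ℝ³ → ℝ be differentiable functions, and let P : ℝ³ → M₃(ℝ) assign to each point a skew-symmetric matrix with P(x)∇S(x) = 0 for all x. Then at every regular point x (a point with P(x) ≠ 0), x is an equilibrium of the metriplectic system ẋ = P∇H + g(∇H)∇S if and only if x is an equilibrium of the unperturbed Hamiltonian system ẋ = P∇H; that is, P(x)∇H(x) + g(∇H(x))∇S(x) = 0 if and only if P(x)∇H(x) = 0. -/

import Mathlib

open Matrix RealInnerProductSpace

/-- The dissipative tensor `g(a) = a ⊗ a − ‖a‖² I` of the paper, as a 3×3 matrix;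
it acts by `g(a) v = ⟨a, v⟩ a − ‖a‖² v`. -/
noncomputable def gmat (a : EuclideanSpace ℝ (Fin 3)) : Matrix (Fin 3) (Fin 3) ℝ :=
  Matrix.vecMulVec a a - (‖a‖ ^ 2) • 1

/-- The gradient of a function on ℝ³ with respect to the standard inner product. -/
noncomputable def grad (f : EuclideanSpace ℝ (Fin 3) → ℝ) (x : EuclideanSpace ℝ (Fin 3)) :
    EuclideanSpace ℝ (Fin 3) := gradient f x

/-!
A 3×3 skew-symmetric matrix `P ≠ 0` acts as `w ⨯₃ ·` for a nonzero axial vector `w`, and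
`g(a) v = a ⨯₃ (a ⨯₃ v)`. With `u = ∇H` and `v = ∇S`, the Casimir condition says `w ⨯₃ v = 0`,
and the equilibrium equation reads `w ⨯₃ u + u ⨯₃ (u ⨯₃ v) = 0`. Taking the dot product with `v`
kills the first term (as `v ∥ w`) and leaves `-‖u ⨯₃ v‖² = 0`, so the dissipative term vanishes.
Conversely, if `w ⨯₃ u = 0` then `u` and `v` are both parallel to `w`, so `u ⨯₃ v = 0`.
-/

section CrossProduct

variable {R : Type*}

def axialVector (A : Matrix (Fin 3) (Fin 3) R) : Fin 3 → R := ![A 2 1, A 0 2, A 1 0]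

theorem mulVec_eq_axialVector_cross [CommRing R] [IsAddTorsionFree R]
    {A : Matrix (Fin 3) (Fin 3) R} (hA : Aᵀ = -A) (v : Fin 3 → R) :
    A *ᵥ v = axialVector A ⨯₃ v := by
  have hskew (i j : Fin 3) : A j i = -A i j := by
    simpa using congrFun (congrFun hA i) j
  have hdiag (i : Fin 3) : A i i = 0 := self_eq_neg.mp (hskew i i)
  ext i
  fin_cases i <;>
    simp only [axialVector, cross_apply, mulVec, dotProduct, Fin.sum_univ_three, hdiag,
      hskew 0 1, hskew 1 2, hskew 2 0, Fin.isValue, Fin.zero_eta, Fin.mk_one, Fin.reduceFinMk,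
      Nat.succ_eq_add_one, Nat.reduceAdd, cons_val_zero, cons_val_one, cons_val] <;> ring

theorem axialVector_ne_zero [CommRing R] [IsAddTorsionFree R]
    {A : Matrix (Fin 3) (Fin 3) R} (hA : Aᵀ = -A) (hA₀ : A ≠ 0) : axialVector A ≠ 0 := by
  contrapose! hA₀
  refine mulVec_injective (funext fun v => ?_)
  rw [mulVec_eq_axialVector_cross hA, hA₀, zero_mulVec, map_zero, LinearMap.zero_apply]

theorem cross_eq_zero_of_cross_eq_zero_of_ne_zero [Field R] {u v w : Fin 3 → R} (hw : w ≠ 0)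
    (hwu : w ⨯₃ u = 0) (hwv : w ⨯₃ v = 0) : u ⨯₃ v = 0 := by
  have : ¬LinearIndependent R ![w, u] := by
    rwa [← crossProduct_ne_zero_iff_linearIndependent, not_not]
  obtain ⟨a, rfl⟩ : ∃ a : R, a • w = u := by
    simpa [LinearIndependent.pair_iff' hw] using this
  rw [map_smul, LinearMap.smul_apply, hwv, smul_zero]

theorem cross_add_cross_cross_eq_zero_iff [Field R] [LinearOrder R] [IsStrictOrderedRing R]
    {u v w : Fin 3 → R} (hw : w ≠ 0) (hwv : w ⨯₃ v = 0) :
    w ⨯₃ u + u ⨯₃ (u ⨯₃ v) = 0 ↔ w ⨯₃ u = 0 := by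
  constructor
  · intro h
    have hwuv : v ⬝ᵥ w ⨯₃ u = 0 := by
      rw [← triple_product_permutation, ← cross_anticomm, hwv, neg_zero, dotProduct_zero]
    have huuv : v ⬝ᵥ u ⨯₃ (u ⨯₃ v) = -(u ⨯₃ v ⬝ᵥ u ⨯₃ v) := by
      rw [triple_product_permutation, triple_product_permutation, ← dotProduct_neg, cross_anticomm]
    have huv : u ⨯₃ v = 0 := by
      have hdot := congrArg (v ⬝ᵥ ·) h
      rwa [dotProduct_add, dotProduct_zero, hwuv, huuv, zero_add, neg_eq_zero,
        dotProduct_self_eq_zero] at hdot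
    simpa [huv] using h
  · intro hwu
    rw [hwu, cross_eq_zero_of_cross_eq_zero_of_ne_zero hw hwu hwv, map_zero, zero_add]

end CrossProduct

theorem gmat_mulVec (a : EuclideanSpace ℝ (Fin 3)) (v : Fin 3 → ℝ) :
    gmat a *ᵥ v = a ⨯₃ (a ⨯₃ v) := by
  have hnorm : ‖a‖ ^ 2 = a ⬝ᵥ a := by
    rw [← real_inner_self_eq_norm_sq, EuclideanSpace.inner_eq_star_dotProduct, star_trivial]
  rw [cross_cross_eq_smul_sub_smul', gmat, sub_mulVec, vecMulVec_mulVec, op_smul_eq_smul,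
    smul_mulVec, one_mulVec, hnorm]

theorem same_regular_equilibria_general (H S : EuclideanSpace ℝ (Fin 3) → ℝ)
    (P : EuclideanSpace ℝ (Fin 3) → Matrix (Fin 3) (Fin 3) ℝ)
    (hskew : ∀ x, (P x)ᵀ = -(P x))
    (hCasimir : ∀ x, P x *ᵥ grad S x = 0)
    (x : EuclideanSpace ℝ (Fin 3)) (hreg : P x ≠ 0) :
    P x *ᵥ grad H x + gmat (grad H x) *ᵥ grad S x = 0 ↔ P x *ᵥ grad H x = 0 := by
  have hw : axialVector (P x) ≠ 0 := axialVector_ne_zero (hskew x) hreg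
  have hwS : axialVector (P x) ⨯₃ grad S x = 0 := by
    rw [← mulVec_eq_axialVector_cross (hskew x), hCasimir x]
  rw [gmat_mulVec, mulVec_eq_axialVector_cross (hskew x)]
  exact cross_add_cross_cross_eq_zero_iff hw hwS

/-- At every regular point, the metriplectic system `ẋ = P∇H + g(∇H)∇S` and the
unperturbed Hamiltonian system `ẋ = P∇H` have the same equilibria. -/
theorem same_regular_equilibria (H S : EuclideanSpace ℝ (Fin 3) → ℝ)
    (hH : Differentiable ℝ H) (hS : Differentiable ℝ S)
    (P : EuclideanSpace ℝ (Fin 3) → Matrix (Fin 3) (Fin 3) ℝ)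
    (hskew : ∀ x, (P x)ᵀ = -(P x))
    (hCasimir : ∀ x, P x *ᵥ grad S x = 0)
    (x : EuclideanSpace ℝ (Fin 3)) (hreg : P x ≠ 0) :
    P x *ᵥ grad H x + gmat (grad H x) *ᵥ grad S x = 0 ↔ P x *ᵥ grad H x = 0 :=
  same_regular_equilibria_general H S P hskew hCasimir x hreg
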